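/- arXiv:math/0501433 — 2 statements merged into one kernel-verified Lean document; each statement's English description precedes it below -/
import Mathlib

section
/- Let R be a po-ring and let A be a partially ordered right R-module. If A is po-coherent, then A is coherent as a right R-module, i.e. every finitely generated R-submodule of A is a finitely presented R-module. -/
/-- A *po-ring*: a ring equipped with a partial order such that addition is
translation-invariant, multiplication by nonnegative elements (on either side) is monotone,
the ring is directed (every element is a difference of two nonnegative elements),
and `0 ≤ 1`. -/
class PORing (R : Type*) extends Ring R, PartialOrder R where
  add_le_add_right' : ∀ a b : R, a ≤ b → ∀ c : R, a + c ≤ b + c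
  mul_le_mul_of_nonneg_right' : ∀ a b c : R, a ≤ b → 0 ≤ c → a * c ≤ b * c
  mul_le_mul_of_nonneg_left' : ∀ a b c : R, a ≤ b → 0 ≤ c → c * a ≤ c * b
  directed' : ∀ x : R, ∃ y z : R, 0 ≤ y ∧ 0 ≤ z ∧ x = y - z
  zero_le_one' : (0 : R) ≤ 1

/-- A *partially ordered right module* over a po-ring `R`: an additive abelian group with a
right `R`-action `rsmul` (written on the right, so `rsmul a ξ` is `aξ`), with the usual
right-module axioms, such that addition is translation-invariant and
`0 ≤ a`, `0 ≤ ξ` imply `0 ≤ aξ`. -/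
class PORightModule (R : Type*) [PORing R] (A : Type*) [AddCommGroup A] [PartialOrder A] where
  rsmul : A → R → A
  add_rsmul : ∀ (a b : A) (r : R), rsmul (a + b) r = rsmul a r + rsmul b r
  rsmul_add : ∀ (a : A) (r s : R), rsmul a (r + s) = rsmul a r + rsmul a s
  rsmul_mul : ∀ (a : A) (r s : R), rsmul a (r * s) = rsmul (rsmul a r) s
  rsmul_one : ∀ a : A, rsmul a 1 = a
  add_le_add_right' : ∀ a b : A, a ≤ b → ∀ c : A, a + c ≤ b + c
  rsmul_nonneg : ∀ (a : A) (r : R), 0 ≤ a → 0 ≤ r → 0 ≤ rsmul a r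

open PORightModule

/-- A po-ring is a partially ordered right module over itself. -/
instance PORing.toPORightModule (R : Type*) [PORing R] : PORightModule R R where
  rsmul := (· * ·)
  add_rsmul := add_mul
  rsmul_add := mul_add
  rsmul_mul a r s := (mul_assoc a r s).symm
  rsmul_one := mul_one
  add_le_add_right' := PORing.add_le_add_right'
  rsmul_nonneg a r ha hr := by
    have h := PORing.mul_le_mul_of_nonneg_right' 0 a r ha hr
    simpa using h

/-- Products of partially ordered right modules, ordered coordinatewise. -/
instance Pi.instPORightModule {R : Type*} [PORing R] {ι : Type*} {A : ι → Type*}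
    [∀ i, AddCommGroup (A i)] [∀ i, PartialOrder (A i)] [∀ i, PORightModule R (A i)] :
    PORightModule R (∀ i, A i) where
  rsmul x r i := rsmul (x i) r
  add_rsmul a b r := funext fun i => add_rsmul (a i) (b i) r
  rsmul_add a r s := funext fun i => rsmul_add (a i) r s
  rsmul_mul a r s := funext fun i => rsmul_mul (a i) r s
  rsmul_one a := funext fun i => rsmul_one (a i)
  add_le_add_right' a b h c := by
    intro i
    exact PORightModule.add_le_add_right' R (a i) (b i) (h i) (c i)
  rsmul_nonneg a r ha hr := by
    intro i
    exact PORightModule.rsmul_nonneg (a i) r (ha i) hr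

/-- Binary products of partially ordered right modules, ordered coordinatewise. -/
instance Prod.instPORightModule {R : Type*} [PORing R] {A B : Type*}
    [AddCommGroup A] [PartialOrder A] [PORightModule R A]
    [AddCommGroup B] [PartialOrder B] [PORightModule R B] :
    PORightModule R (A × B) where
  rsmul x r := (rsmul x.1 r, rsmul x.2 r)
  add_rsmul a b r := by
    refine Prod.ext ?_ ?_ <;> simp [PORightModule.add_rsmul]
  rsmul_add a r s := by
    refine Prod.ext ?_ ?_ <;> simp [PORightModule.rsmul_add]
  rsmul_mul a r s := by
    refine Prod.ext ?_ ?_ <;> simp [PORightModule.rsmul_mul]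
  rsmul_one a := by
    refine Prod.ext ?_ ?_ <;> simp [PORightModule.rsmul_one]
  add_le_add_right' a b h c := by
    rw [Prod.le_def] at h ⊢
    constructor
    · simpa using PORightModule.add_le_add_right' R a.1 b.1 h.1 c.1
    · simpa using PORightModule.add_le_add_right' R a.2 b.2 h.2 c.2
  rsmul_nonneg a r ha hr := by
    rw [Prod.le_def] at ha ⊢
    constructor
    · simpa using PORightModule.rsmul_nonneg a.1 r (by simpa using ha.1) hr
    · simpa using PORightModule.rsmul_nonneg a.2 r (by simpa using ha.2) hr

section Defs

variable (R : Type*) [PORing R]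

/-- The product `UX = a₁ξ₁ + ⋯ + aₙξₙ` of a row matrix `U = (a₁,…,aₙ)` with entries in `A`
and a column matrix `X = (ξ₁,…,ξₙ)ᵗ` with entries in `R`. -/
def rowMul {A : Type*} [AddCommGroup A] [PartialOrder A] [PORightModule R A]
    {n : ℕ} (U : Fin n → A) (X : Fin n → R) : A :=
  ∑ i, rsmul (U i) (X i)

/-- A subset `S` of a partially ordered right `R`-module is a *finitely generated
`R⁺`-subsemimodule* if it is the set of all `R⁺`-linear combinations of some finite subset. -/
def IsFGConeIn {A : Type*} [AddCommGroup A] [PartialOrder A] [PORightModule R A]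
    (S : Set A) : Prop :=
  ∃ (k : ℕ) (g : Fin k → A),
    S = { a | ∃ Y : Fin k → R, (∀ i, 0 ≤ Y i) ∧ a = rowMul R g Y }

/-- `A` is *finitely related at* the row matrix `U ∈ M_{1,n}(A)` if the solution set of the
mixed system `UX ≥ 0, X ≥ 0` is a finitely generated `R⁺`-subsemimodule of `M_{n,1}(R)`. -/
def FinitelyRelatedAt {A : Type*} [AddCommGroup A] [PartialOrder A] [PORightModule R A]
    {n : ℕ} (U : Fin n → A) : Prop :=
  IsFGConeIn R {X : Fin n → R | 0 ≤ rowMul R U X ∧ ∀ i, 0 ≤ X i}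

/-- `A` is *finitely po-presented at* the row matrix `U ∈ M_{1,n}(A)` if the solution set of
the system `UX ≥ 0` is a finitely generated `R⁺`-subsemimodule of `M_{n,1}(R)`. -/
def FinitelyPoPresentedAt {A : Type*} [AddCommGroup A] [PartialOrder A] [PORightModule R A]
    {n : ℕ} (U : Fin n → A) : Prop :=
  IsFGConeIn R {X : Fin n → R | 0 ≤ rowMul R U X}

/-- A row matrix `U` is *spanning* if its entries generate `A` as a right `R`-module, i.e.
every element of `A` is an `R`-linear combination `UX` of the entries. -/
def SpanningRow {A : Type*} [AddCommGroup A] [PartialOrder A] [PORightModule R A]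
    {n : ℕ} (U : Fin n → A) : Prop :=
  ∀ a : A, ∃ X : Fin n → R, a = rowMul R U X

variable (A : Type*) [AddCommGroup A] [PartialOrder A] [PORightModule R A]

/-- `A` is *finitely po-presented* if it is finitely po-presented at some spanning row
matrix. -/
def FinitelyPoPresented : Prop :=
  ∃ (n : ℕ) (U : Fin n → A), SpanningRow R U ∧ FinitelyPoPresentedAt R U

/-- `A` is *finitely related* if it is a finitely generated right `R`-module and is finitely
related at every spanning row matrix. -/
def FinitelyRelatedMod : Prop :=
  (∃ (n : ℕ) (U : Fin n → A), SpanningRow R U) ∧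
    ∀ (n : ℕ) (U : Fin n → A), SpanningRow R U → FinitelyRelatedAt R U

/-- `A` is *po-coherent* if it is finitely related at every row matrix of elements of `A`. -/
def PoCoherent : Prop :=
  ∀ (n : ℕ) (U : Fin n → A), FinitelyRelatedAt R U

end Defs

/-- A po-ring is *right po-coherent* if it is po-coherent as a partially ordered right module
over itself. -/
def RightPoCoherent (R : Type*) [PORing R] : Prop :=
  PoCoherent R R

/-- The solution set (in `M_{n,1}(R)`) of the homogeneous system of equations `UX = 0` is a
finitely generated right `R`-submodule of `M_{n,1}(R)`.  A finitely generated module with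
finite generating row `U` is a finitely presented `R`-module precisely when this holds. -/
def RelationsFG (R : Type*) [PORing R] {A : Type*} [AddCommGroup A] [PartialOrder A]
    [PORightModule R A] {n : ℕ} (U : Fin n → A) : Prop :=
  ∃ (k : ℕ) (g : Fin k → (Fin n → R)),
    {X : Fin n → R | rowMul R U X = 0} = {X | ∃ Y : Fin k → R, X = rowMul R g Y}

/-- `A` is a *coherent* right `R`-module: every finitely generated submodule is finitely
presented, i.e. for each row `U ∈ M_{1,n}(A)` (whose entries generate an arbitrary finitely
generated submodule) the module of relations of `U` is finitely generated. -/
def ModuleCoherent (R A : Type*) [PORing R] [AddCommGroup A] [PartialOrder A]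
    [PORightModule R A] : Prop :=
  ∀ (n : ℕ) (U : Fin n → A), RelationsFG R U

section Aux

variable {R : Type*} [PORing R] {A : Type*} [AddCommGroup A] [PartialOrder A]
  [PORightModule R A]

/-- Right multiplication by `r` as an additive monoid hom. -/
def rsmulHomL (r : R) : A →+ A where
  toFun a := rsmul a r
  map_zero' := by
    have h := (add_rsmul (R := R) (0 : A) 0 r).symm
    rw [add_zero] at h
    exact (left_eq_add.mp h.symm)
  map_add' a b := add_rsmul a b r

/-- `rsmul a ·` as an additive monoid hom. -/
def rsmulHomR (a : A) : R →+ A where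
  toFun r := rsmul (R := R) a r
  map_zero' := by
    have h := (rsmul_add (R := R) a 0 0).symm
    rw [add_zero] at h
    exact (left_eq_add.mp h.symm)
  map_add' r s := rsmul_add a r s

lemma rsmul_zero_left (r : R) : rsmul (R := R) (0 : A) r = 0 := (rsmulHomL (A := A) r).map_zero

lemma rsmul_zero_right (a : A) : rsmul (R := R) a (0 : R) = 0 := (rsmulHomR (R := R) a).map_zero

lemma rsmul_neg_left (a : A) (r : R) : rsmul (R := R) (-a) r = -(rsmul a r) :=
  (rsmulHomL (A := A) r).map_neg a

lemma rsmul_sub_right (a : A) (r s : R) :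
    rsmul (R := R) a (r - s) = rsmul a r - rsmul a s :=
  (rsmulHomR (R := R) a).map_sub r s

@[simp] lemma pi_rsmul_apply {ι : Type*} {M : ι → Type*} [∀ i, AddCommGroup (M i)]
    [∀ i, PartialOrder (M i)] [∀ i, PORightModule R (M i)]
    (x : ∀ i, M i) (r : R) (i : ι) :
    rsmul (R := R) x r i = rsmul (x i) r := rfl

@[simp] lemma ring_rsmul (a r : R) : rsmul (R := R) a r = a * r := rfl

include R in
lemma add_le_add_right_A {a b : A} (hab : a ≤ b) (c : A) : a + c ≤ b + c :=
  PORightModule.add_le_add_right' R a b hab c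

include R in
lemma nonneg_antisymm {a : A} (h1 : (0 : A) ≤ a) (h2 : (0 : A) ≤ -a) : a = 0 := by
  have h3 : (0 : A) + a ≤ -a + a := add_le_add_right_A (R := R) h2 a
  rw [zero_add, neg_add_cancel] at h3
  exact le_antisymm h3 h1

variable (R)

lemma rowMul_rowMul {n k : ℕ} (U : Fin n → A) (g : Fin k → (Fin n → R)) (Y : Fin k → R) :
    rowMul R U (rowMul R g Y) = rowMul R (fun j => rowMul R U (g j)) Y := by
  unfold rowMul
  calc ∑ i, rsmul (U i) ((∑ j, rsmul (R := R) (g j) (Y j)) i)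
      = ∑ i, rsmul (U i) (∑ j, g j i * Y j) := by
        refine Finset.sum_congr rfl fun i _ => ?_
        congr 1
        rw [Finset.sum_apply]
        rfl
    _ = ∑ i, ∑ j, rsmul (U i) (g j i * Y j) := by
        refine Finset.sum_congr rfl fun i _ => ?_
        exact map_sum (rsmulHomR (R := R) (U i)) _ _
    _ = ∑ j, ∑ i, rsmul (U i) (g j i * Y j) := Finset.sum_comm
    _ = ∑ j, ∑ i, rsmul (rsmul (U i) (g j i)) (Y j) := by
        refine Finset.sum_congr rfl fun j _ => Finset.sum_congr rfl fun i _ => ?_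
        exact rsmul_mul (U i) (g j i) (Y j)
    _ = ∑ j, rsmul (∑ i, rsmul (R := R) (U i) (g j i)) (Y j) := by
        refine Finset.sum_congr rfl fun j _ => ?_
        exact (map_sum (rsmulHomL (A := A) (Y j)) _ _).symm

lemma rowMul_single {k : ℕ} (g : Fin k → A) (j : Fin k) :
    rowMul R g (Pi.single j (1 : R)) = g j := by
  unfold rowMul
  rw [Finset.sum_eq_single j]
  · rw [Pi.single_eq_same, rsmul_one]
  · intro j' _ hj'
    rw [Pi.single_eq_of_ne hj', rsmul_zero_right]
  · intro habs; exact absurd (Finset.mem_univ j) habs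

lemma rowMul_neg_left {n : ℕ} (U : Fin n → A) (X : Fin n → R) :
    rowMul R (fun i => -(U i)) X = -(rowMul R U X) := by
  unfold rowMul
  rw [← Finset.sum_neg_distrib]
  exact Finset.sum_congr rfl fun i _ => rsmul_neg_left (U i) (X i)

lemma rowMul_sub_right {n : ℕ} (U : Fin n → A) (P Q : Fin n → R) :
    rowMul R U (fun i => P i - Q i) = rowMul R U P - rowMul R U Q := by
  unfold rowMul
  rw [← Finset.sum_sub_distrib]
  exact Finset.sum_congr rfl fun i _ => rsmul_sub_right (U i) (P i) (Q i)

lemma rowMul_split {n : ℕ} (U V : Fin n → A) (Z : Fin (n + n) → R) :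
    rowMul R (Fin.append U V) Z =
      rowMul R U (fun i => Z (Fin.castAdd n i)) + rowMul R V (fun i => Z (Fin.natAdd n i)) := by
  unfold rowMul
  rw [Fin.sum_univ_add]
  congr 1
  · exact Finset.sum_congr rfl fun i _ => by rw [Fin.append_left]
  · exact Finset.sum_congr rfl fun i _ => by rw [Fin.append_right]

lemma rowMul_basis {n : ℕ} (Y : Fin n → R) :
    rowMul R (fun j => (Pi.single j (1 : R) : Fin n → R)) Y = Y := by
  funext l
  unfold rowMul
  rw [Finset.sum_apply]
  have : ∀ j : Fin n, rsmul (R := R) (Pi.single j (1 : R) : Fin n → R) (Y j) l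
      = if l = j then Y j else 0 := by
    intro j
    rw [pi_rsmul_apply, ring_rsmul, Pi.single_apply]
    split <;> simp
  rw [Finset.sum_congr rfl fun j _ => this j]
  simp

/-- Solution sets of finite systems of inequalities `UᵢX ≥ 0, X ≥ 0` over a po-coherent
module are finitely generated cones. -/
lemma fg_multi {A : Type*} [AddCommGroup A] [PartialOrder A] [PORightModule R A]
    (h : PoCoherent R A) (n : ℕ) :
    ∀ (m : ℕ) (Us : Fin m → (Fin n → A)),
      IsFGConeIn R {X : Fin n → R | (∀ i, 0 ≤ rowMul R (Us i) X) ∧ ∀ j, 0 ≤ X j} := by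
  intro m
  induction m with
  | zero =>
    intro Us
    refine ⟨n, fun j => Pi.single j (1 : R), ?_⟩
    ext X
    simp only [Set.mem_setOf_eq]
    constructor
    · rintro ⟨-, hX⟩
      exact ⟨X, hX, (rowMul_basis R X).symm⟩
    · rintro ⟨Y, hY, rfl⟩
      exact ⟨fun i => i.elim0, by rw [rowMul_basis]; exact hY⟩
  | succ m ih =>
    intro Us
    obtain ⟨k, g, hg⟩ := ih (fun i => Us i.succ)
    set W : Fin k → A := fun j => rowMul R (Us 0) (g j) with hW
    obtain ⟨k', g', hg'⟩ := h k W
    refine ⟨k', fun j' => rowMul R g (g' j'), ?_⟩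
    ext X
    simp only [Set.mem_setOf_eq]
    constructor
    · rintro ⟨hpos, hXpos⟩
      have hX' : X ∈ {X : Fin n → R | (∀ i : Fin m, 0 ≤ rowMul R (Us i.succ) X) ∧
          ∀ j, 0 ≤ X j} := ⟨fun i => hpos i.succ, hXpos⟩
      rw [hg] at hX'
      obtain ⟨Y, hY, rfl⟩ := hX'
      have hYmem : Y ∈ {Y : Fin k → R | 0 ≤ rowMul R W Y ∧ ∀ i, 0 ≤ Y i} := by
        refine ⟨?_, hY⟩
        rw [hW, ← rowMul_rowMul]
        exact hpos 0
      rw [hg'] at hYmem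
      obtain ⟨Z, hZ, rfl⟩ := hYmem
      exact ⟨Z, hZ, rowMul_rowMul R g g' Z⟩
    · rintro ⟨Z, hZ, rfl⟩
      set Y : Fin k → R := rowMul R g' Z with hY
      have hYmem : Y ∈ {Y : Fin k → R | 0 ≤ rowMul R W Y ∧ ∀ i, 0 ≤ Y i} := by
        rw [hg']; exact ⟨Z, hZ, rfl⟩
      obtain ⟨hWY, hYpos⟩ := hYmem
      have hXmem : rowMul R g Y ∈ {X : Fin n → R |
          (∀ i : Fin m, 0 ≤ rowMul R (Us i.succ) X) ∧ ∀ j, 0 ≤ X j} := by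
        rw [hg]; exact ⟨Y, hYpos, rfl⟩
      obtain ⟨hsucc, hXpos⟩ := hXmem
      rw [← rowMul_rowMul]
      refine ⟨?_, hXpos⟩
      intro i
      refine Fin.cases ?_ ?_ i
      · rw [rowMul_rowMul]; exact hWY
      · intro i; exact hsucc i
  
end Aux

/-- Let `R` be a po-ring and `A` a partially ordered right `R`-module.
If `A` is po-coherent then `A` is coherent as a right `R`-module. -/
theorem poCoherent_imp_coherent
    (R A : Type*) [PORing R] [AddCommGroup A] [PartialOrder A] [PORightModule R A]
    (h : PoCoherent R A) :
    ModuleCoherent R A := by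
  intro n U
  set V1 : Fin (n + n) → A := Fin.append U (fun i => -(U i)) with hV1
  set V2 : Fin (n + n) → A := Fin.append (fun i => -(U i)) U with hV2
  obtain ⟨k, z, hz⟩ := fg_multi R h (n + n) 2 ![V1, V2]
  set d : Fin k → (Fin n → R) := fun j i => z j (Fin.castAdd n i) - z j (Fin.natAdd n i)
    with hd
  have key1 : ∀ Z : Fin (n + n) → R, rowMul R V1 Z
      = rowMul R U (fun i => Z (Fin.castAdd n i) - Z (Fin.natAdd n i)) := by
    intro Z
    rw [hV1, rowMul_split, rowMul_neg_left, rowMul_sub_right, ← sub_eq_add_neg]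
  have key2 : ∀ Z : Fin (n + n) → R, rowMul R V2 Z
      = -(rowMul R U (fun i => Z (Fin.castAdd n i) - Z (Fin.natAdd n i))) := by
    intro Z
    rw [hV2, rowMul_split, rowMul_neg_left, rowMul_sub_right, neg_sub, sub_eq_neg_add]
  -- each generator `d j` is a relation
  have hdz : ∀ j, rowMul R U (d j) = 0 := by
    intro j
    have hzj : z j ∈ {X : Fin (n + n) → R |
        (∀ i : Fin 2, 0 ≤ rowMul R (![V1, V2] i) X) ∧ ∀ l, 0 ≤ X l} := by
      rw [hz]
      refine ⟨Pi.single j (1 : R), ?_, (rowMul_single R z j).symm⟩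
      intro i
      rw [Pi.single_apply]
      split
      · exact PORing.zero_le_one'
      · exact le_refl 0
    obtain ⟨hineq, -⟩ := hzj
    have h1 := hineq 0
    have h2 := hineq 1
    simp only [Matrix.cons_val_zero, Matrix.cons_val_one, Matrix.head_cons] at h1 h2
    rw [key1] at h1
    rw [key2] at h2
    exact nonneg_antisymm (R := R) h1 h2
  refine ⟨k, d, ?_⟩
  ext X
  simp only [Set.mem_setOf_eq]
  constructor
  · intro hX
    choose P Q hP hQ hPQ using fun i => PORing.directed' (X i)
    have hmem : Fin.append P Q ∈ {X : Fin (n + n) → R |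
        (∀ i : Fin 2, 0 ≤ rowMul R (![V1, V2] i) X) ∧ ∀ l, 0 ≤ X l} := by
      have hsub : (fun i => Fin.append P Q (Fin.castAdd n i) - Fin.append P Q (Fin.natAdd n i))
          = X := by
        funext i
        rw [Fin.append_left, Fin.append_right, ← hPQ i]
      constructor
      · intro i
        fin_cases i
        · show (0 : A) ≤ rowMul R V1 (Fin.append P Q)
          rw [key1, hsub, hX]
        · show (0 : A) ≤ rowMul R V2 (Fin.append P Q)
          rw [key2, hsub, hX, neg_zero]
      · intro l
        refine Fin.addCases (fun i => ?_) (fun i => ?_) l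
        · rw [Fin.append_left]; exact hP i
        · rw [Fin.append_right]; exact hQ i
    rw [hz] at hmem
    obtain ⟨Y, -, hzY⟩ := hmem
    refine ⟨Y, ?_⟩
    funext i
    have hcast : P i = rowMul R z Y (Fin.castAdd n i) := by
      rw [← hzY, Fin.append_left]
    have hnat : Q i = rowMul R z Y (Fin.natAdd n i) := by
      rw [← hzY, Fin.append_right]
    have happ : ∀ l : Fin (n + n), rowMul R z Y l = ∑ j, z j l * Y j := by
      intro l
      unfold rowMul
      rw [Finset.sum_apply]
      rfl
    have hdY : rowMul R d Y i = ∑ j, (z j (Fin.castAdd n i) - z j (Fin.natAdd n i)) * Y j := by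
      unfold rowMul
      rw [Finset.sum_apply]
      rfl
    rw [hPQ i, hcast, hnat, happ, happ, hdY, ← Finset.sum_sub_distrib]
    exact Finset.sum_congr rfl fun j _ => (sub_mul _ _ _).symm
  · rintro ⟨Y, rfl⟩
    rw [rowMul_rowMul]
    have hzero : (fun j => rowMul R U (d j)) = fun _ => (0 : A) := funext hdz
    rw [hzero]
    unfold rowMul
    rw [Finset.sum_congr rfl fun j _ => rsmul_zero_left (Y j)]
    exact Finset.sum_const_zero
end

section
/- Let R be a po-ring, let A be a po-coherent partially ordered right R-module, and let F be a finitely generated convex submodule of A, i.e. F = Conv B = {z ∈ A | ∃ x, y ∈ B, x ≤ z ≤ y} for some finitely generated R-submodule B of A. Then the quotient module A/F, partially ordered by declaring a + F ≥ 0 if and only if there exists f ∈ F with a + f ≥ 0 in A, is a po-coherent partially ordered right R-module. -/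
open PORightModule

section AuxLemmas

variable {R : Type*} [PORing R] {A : Type*} [AddCommGroup A] [PartialOrder A]
  [PORightModule R A]

lemma rsmul_zero' (a : A) : rsmul a (0 : R) = 0 := by
  have h : rsmul a ((0 : R) + 0) = rsmul a (0 : R) + rsmul a (0 : R) := rsmul_add a (0:R) (0:R)
  rw [add_zero] at h
  have h' : rsmul a (0 : R) + 0 = rsmul a (0 : R) + rsmul a (0 : R) := by
    rw [add_zero]; exact h
  exact (add_left_cancel h').symm

lemma rsmul_neg' (a : A) (r : R) : rsmul a (-r) = -(rsmul a r) := by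
  have h : rsmul a (r + (-r)) = rsmul a r + rsmul a (-r) := rsmul_add a r (-r)
  rw [add_neg_cancel, rsmul_zero'] at h
  exact eq_neg_of_add_eq_zero_right h.symm

lemma neg_rsmul' (a : A) (r : R) : rsmul (-a) r = -(rsmul a r) := by
  have h : rsmul (a + (-a)) r = rsmul a r + rsmul (-a) r := add_rsmul a (-a) r
  rw [add_neg_cancel] at h
  have h0 : rsmul (0 : A) r = 0 := by
    have h2 : rsmul ((0 : A) + 0) r = rsmul (0 : A) r + rsmul (0 : A) r := add_rsmul 0 0 r
    rw [add_zero] at h2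
    have h3 : rsmul (0 : A) r + 0 = rsmul (0 : A) r + rsmul (0 : A) r := by
      rw [add_zero]; exact h2
    exact (add_left_cancel h3).symm
  rw [h0] at h
  exact eq_neg_of_add_eq_zero_right h.symm

lemma rsmul_sub' (a : A) (r s : R) : rsmul a (r - s) = rsmul a r - rsmul a s := by
  rw [sub_eq_add_neg, rsmul_add, rsmul_neg', sub_eq_add_neg]

lemma rowMul_sub' {n : ℕ} (b : Fin n → A) (Y Z : Fin n → R) :
    rowMul R b (Y - Z) = rowMul R b Y - rowMul R b Z := by
  unfold rowMul
  rw [← Finset.sum_sub_distrib]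
  exact Finset.sum_congr rfl fun i _ => by
    simp only [Pi.sub_apply]; exact rsmul_sub' (b i) (Y i) (Z i)

lemma add_le_add_left'' (R : Type*) [PORing R] {A : Type*} [AddCommGroup A] [PartialOrder A]
    [PORightModule R A] (a c d : A) (hcd : c ≤ d) : a + c ≤ a + d := by
  have := PORightModule.add_le_add_right' R c d hcd a
  simpa [add_comm] using this

lemma rowMul_append_split {m nB : ℕ} (U : Fin m → A) (b : Fin nB → A)
    (Z : Fin (m + (nB + nB)) → R) :
    rowMul R (Fin.append U (Fin.append b (fun i => -(b i)))) Z
      = rowMul R U (fun i => Z (Fin.castAdd (nB + nB) i))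
        + (rowMul R b (fun i => Z (Fin.natAdd m (Fin.castAdd nB i)))
           - rowMul R b (fun i => Z (Fin.natAdd m (Fin.natAdd nB i)))) := by
  unfold rowMul
  rw [Fin.sum_univ_add, Fin.sum_univ_add]
  simp only [Fin.append_left, Fin.append_right, neg_rsmul']
  rw [sub_eq_add_neg, Finset.sum_neg_distrib]

lemma rowMul_apply' {n k : ℕ} (g : Fin k → (Fin n → R)) (W : Fin k → R) (i : Fin n) :
    rowMul R g W i = rowMul R (fun j => g j i) W := by
  unfold rowMul
  rw [Finset.sum_apply]
  rfl

lemma append_nonneg' {m n : ℕ} {P : Fin m → R} {Q : Fin n → R} (hP : ∀ i, 0 ≤ P i)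
    (hQ : ∀ i, 0 ≤ Q i) : ∀ i, 0 ≤ Fin.append P Q i := by
  intro i
  refine Fin.addCases (motive := fun i => 0 ≤ Fin.append P Q i) ?_ ?_ i <;> intro j <;>
    simp only [Fin.append_left, Fin.append_right]
  · exact hP j
  · exact hQ j

end AuxLemmas

/-- Let `R` be a po-ring, `A` a po-coherent partially ordered right
`R`-module, and `F = Conv B = {z | ∃ x y ∈ B, x ≤ z ≤ y}` the convex submodule generated by a
finitely generated submodule `B` of `A` (with generating row `b`).  Then the quotient module
`A/F`, ordered by `a + F ≥ 0 ↔ ∃ f ∈ F, 0 ≤ a + f`, is a po-coherent partially ordered right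
`R`-module.  Since the canonical projection `π : A → A/F` is surjective, every row matrix of
`A/F` is the image `πU` of a row matrix `U` of `A`, and `(πU)X ≥ 0 ↔ ∃ f ∈ F, 0 ≤ UX + f`;
moreover the solution semimodules of the mixed systems over `A/F` live in `M_{m,1}(R)`.
Hence po-coherence of `A/F` states exactly: for every row matrix `U` of `A`, the set
`{X ∈ M_{m,1}(R) | (∃ f ∈ F, 0 ≤ UX + f) ∧ X ≥ 0}` is a finitely generated
`R⁺`-subsemimodule of `M_{m,1}(R)`. -/
theorem poCoherent_quotient_by_fg_convex
    (R A : Type*) [PORing R] [AddCommGroup A] [PartialOrder A] [PORightModule R A]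
    (h : PoCoherent R A)
    (nB : ℕ) (b : Fin nB → A) (B : Set A) (hB : B = { a | ∃ Y : Fin nB → R, a = rowMul R b Y })
    (F : Set A) (hF : F = { z | ∃ x ∈ B, ∃ y ∈ B, x ≤ z ∧ z ≤ y }) :
    ∀ (m : ℕ) (U : Fin m → A),
      IsFGConeIn R {X : Fin m → R | (∃ f ∈ F, 0 ≤ rowMul R U X + f) ∧ ∀ i, 0 ≤ X i} := by
  subst hB hF
  intro m U
  set V : Fin (m + (nB + nB)) → A := Fin.append U (Fin.append b (fun i => -(b i))) with hV
  obtain ⟨k, g, hg⟩ := h (m + (nB + nB)) V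
  refine ⟨k, fun j i => g j (Fin.castAdd (nB + nB) i), ?_⟩
  ext X
  simp only [Set.mem_setOf_eq]
  constructor
  · rintro ⟨⟨f, ⟨x, ⟨Yx, hx⟩, y, ⟨Yy, hy⟩, hxf, hfy⟩, hpos⟩, hXpos⟩
    have h1 : 0 ≤ rowMul R U X + rowMul R b Yy := by
      refine le_trans hpos ?_
      rw [← hy] at *
      exact add_le_add_left'' R (rowMul R U X) f y hfy
    choose Yp Ym hYp hYm hYe using fun i => PORing.directed' (Yy i)
    set Z : Fin (m + (nB + nB)) → R := Fin.append X (Fin.append Yp Ym) with hZ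
    have e1 : (fun i => Z (Fin.castAdd (nB + nB) i)) = X := by
      funext i; simp only [hZ, Fin.append_left]
    have e2 : (fun i => Z (Fin.natAdd m (Fin.castAdd nB i))) = Yp := by
      funext i; simp only [hZ, Fin.append_right, Fin.append_left]
    have e3 : (fun i => Z (Fin.natAdd m (Fin.natAdd nB i))) = Ym := by
      funext i; simp only [hZ, Fin.append_right]
    have hZmem : Z ∈ {X | 0 ≤ rowMul R V X ∧ ∀ i, 0 ≤ X i} := by
      constructor
      · rw [hV, rowMul_append_split, e1, e2, e3]
        have hYY : rowMul R b Yp - rowMul R b Ym = rowMul R b Yy := by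
          rw [← rowMul_sub']
          congr 1
          funext i
          simp only [Pi.sub_apply]
          exact (hYe i).symm
        rw [hYY]
        exact h1
      · exact append_nonneg' hXpos (append_nonneg' hYp hYm)
    rw [hg] at hZmem
    obtain ⟨W, hW, hZW⟩ := hZmem
    refine ⟨W, hW, ?_⟩
    funext i
    have := congrFun e1 i
    rw [hZW] at this
    calc X i = rowMul R g W (Fin.castAdd (nB + nB) i) := this.symm
      _ = rowMul R (fun j => g j (Fin.castAdd (nB + nB) i)) W :=
          rowMul_apply' g W (Fin.castAdd (nB + nB) i)
      _ = rowMul R (fun j i => g j (Fin.castAdd (nB + nB) i)) W i :=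
          (rowMul_apply' (fun j i => g j (Fin.castAdd (nB + nB) i)) W i).symm
  · rintro ⟨W, hW, hXW⟩
    set Z : Fin (m + (nB + nB)) → R := rowMul R g W with hZ
    have hZmem : Z ∈ {X | 0 ≤ rowMul R V X ∧ ∀ i, 0 ≤ X i} := by
      rw [hg]; exact ⟨W, hW, rfl⟩
    obtain ⟨hZ1, hZ2⟩ := hZmem
    have e1 : (fun i => Z (Fin.castAdd (nB + nB) i)) = X := by
      funext i
      rw [hXW]
      calc Z (Fin.castAdd (nB + nB) i)
          = rowMul R (fun j => g j (Fin.castAdd (nB + nB) i)) W :=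
            rowMul_apply' g W (Fin.castAdd (nB + nB) i)
        _ = rowMul R (fun j i => g j (Fin.castAdd (nB + nB) i)) W i :=
            (rowMul_apply' (fun j i => g j (Fin.castAdd (nB + nB) i)) W i).symm
    rw [hV, rowMul_append_split, e1] at hZ1
    refine ⟨⟨rowMul R b ((fun i => Z (Fin.natAdd m (Fin.castAdd nB i)))
        - (fun i => Z (Fin.natAdd m (Fin.natAdd nB i)))), ?_, ?_⟩, ?_⟩
    · refine ⟨_, ⟨_, rfl⟩, _, ⟨_, rfl⟩, le_refl _, le_refl _⟩
    · rw [rowMul_sub']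
      exact hZ1
    · intro i
      have := hZ2 (Fin.castAdd (nB + nB) i)
      rw [congrFun e1 i] at this
      exact this
end
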